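/- arXiv:2110.13084 — 16 statements merged into one kernel-verified Lean document; each statement's English description precedes it below -/
import Mathlib

section
/- Let G be an infinite group. Then G is Z_mon-cofinite if and only if either G has prime exponent or G satisfies the weak cancellation law (WCL). -/
/-- `G` is `Z_mon`-cofinite: for every `n ≥ 1` and `g ∈ G`, the set of `n`-th roots of `g`
is either finite or all of `G`. -/
def ZmonCofinite (G : Type*) [Group G] : Prop :=
  ∀ n : ℕ, 1 ≤ n → ∀ g : G,
    {x : G | x ^ n = g}.Finite ∨ {x : G | x ^ n = g} = Set.univ

/-- `G` satisfies the weak cancellation law: for every `n ≥ 1` the map `x ↦ x^n`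
is finitely-many-to-one. -/
def WCL (G : Type*) [Group G] : Prop :=
  ∀ n : ℕ, 1 ≤ n → ∀ a : G, {x : G | x ^ n = a}.Finite

/-- `G` is almost torsion-free: every `n`-socle `G[n]` is finite. -/
def AlmostTorsionFree (G : Type*) [Group G] : Prop :=
  ∀ n : ℕ, 1 ≤ n → {x : G | x ^ n = 1}.Finite

/-- `G` has prime exponent. -/
def HasPrimeExponent (G : Type*) [Group G] : Prop :=
  ∃ p : ℕ, p.Prime ∧ ∀ x : G, x ^ p = 1

/-!
If `G` has prime exponent `p`, then `x ↦ x ^ n` is constant for `p ∣ n` and injective otherwise,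
so every root set has at most one element, is empty, or is all of `G`.

Conversely, if `G` is `Z_mon`-cofinite but some root set `{x | x ^ n = a}` is infinite, it is all of
`G`, so `G` has finite exponent `e`. For a prime `p ∣ e`, the map `x ↦ x ^ (e / p)` lands in the
`p`-socle `G[p]`. If `G[p] = G` we are done; otherwise `G[p]` is finite, so by pigeonhole some fibre
of this map is infinite, hence all of `G`, and then `e / p` kills `G`, contradicting the minimality
of `e`.
-/

section

variable {G : Type*} [Group G]

theorem pow_left_injective_of_coprime {m n : ℕ} (hG : ∀ x : G, x ^ m = 1)
    (hn : n.Coprime m) : Function.Injective fun x : G => x ^ n := by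
  have hinv : ∀ x : G, (x ^ n) ^ n.gcdA m = x := fun x => by
    calc (x ^ n) ^ n.gcdA m = (x ^ n) ^ n.gcdA m * (x ^ m) ^ n.gcdB m := by
          rw [hG, one_zpow, mul_one]
      _ = x ^ ((n.gcd m : ℕ) : ℤ) := by
          rw [Nat.gcd_eq_gcd_ab, zpow_add, zpow_mul, zpow_mul, zpow_natCast, zpow_natCast]
      _ = x := by rw [hn, Nat.cast_one, zpow_one]
  exact Function.LeftInverse.injective (g := fun y => y ^ n.gcdA m) hinv

theorem setOf_pow_eq_eq_univ_iff {n : ℕ} {a : G} :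
    {x : G | x ^ n = a} = Set.univ ↔ a = 1 ∧ ∀ x : G, x ^ n = 1 := by
  simp only [Set.eq_univ_iff_forall, Set.mem_ofPred_eq]
  refine ⟨fun h => ?_, fun ⟨ha, h⟩ x => ha ▸ h x⟩
  obtain rfl : a = 1 := (h 1).symm.trans (one_pow n)
  exact ⟨rfl, h⟩

theorem ZmonCofinite.of_wcl (h : WCL G) : ZmonCofinite G :=
  fun n hn g => Or.inl (h n hn g)

theorem ZmonCofinite.of_hasPrimeExponent (h : HasPrimeExponent G) : ZmonCofinite G := by
  obtain ⟨p, hp, hG⟩ := h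
  intro n _ g
  by_cases hpn : p ∣ n
  · obtain ⟨k, rfl⟩ := hpn
    have hpow : ∀ x : G, x ^ (p * k) = 1 := fun x => by rw [pow_mul, hG, one_pow]
    by_cases hg : g = 1
    · exact Or.inr (setOf_pow_eq_eq_univ_iff.2 ⟨hg, hpow⟩)
    · refine Or.inl (Set.finite_empty.subset fun x hx => hg ?_)
      exact (hx : x ^ (p * k) = g).symm.trans (hpow x)
  · have hinj := pow_left_injective_of_coprime hG ((hp.coprime_iff_not_dvd.2 hpn).symm)
    exact Or.inl (Set.Subsingleton.finite fun x hx y hy => hinj (hx.trans hy.symm))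

theorem ZmonCofinite.exponentExists_of_not_wcl (hZ : ZmonCofinite G) (hW : ¬ WCL G) :
    Monoid.ExponentExists G := by
  simp only [WCL, not_forall] at hW
  obtain ⟨n, hn, a, ha⟩ := hW
  exact ⟨n, hn, (setOf_pow_eq_eq_univ_iff.1 ((hZ n hn a).resolve_left ha)).2⟩

theorem ZmonCofinite.pow_eq_one_or_pow_eq_one [Infinite G] (hZ : ZmonCofinite G) {m p : ℕ}
    (hm : 1 ≤ m) (hp : 1 ≤ p) (h : ∀ x : G, x ^ (m * p) = 1) :
    (∀ x : G, x ^ p = 1) ∨ ∀ x : G, x ^ m = 1 := by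
  refine (hZ p hp 1).symm.imp (fun huniv => (setOf_pow_eq_eq_univ_iff.1 huniv).2) fun hfin => ?_
  have _ : Finite {y : G | y ^ p = 1} := hfin
  let f : G → {y : G | y ^ p = 1} := fun x => ⟨x ^ m, by simpa [← pow_mul] using h x⟩
  obtain ⟨⟨g, _⟩, hg⟩ := Finite.exists_infinite_fiber f
  have hginf : {x : G | x ^ m = g}.Infinite := by
    simpa [f, Set.infinite_coe_iff, Set.preimage, Subtype.ext_iff] using hg
  exact (setOf_pow_eq_eq_univ_iff.1 ((hZ m hm g).resolve_left hginf)).2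

theorem ZmonCofinite.hasPrimeExponent [Infinite G] (hZ : ZmonCofinite G)
    (hE : Monoid.ExponentExists G) : HasPrimeExponent G := by
  set e := Monoid.exponent G
  have he : 0 < e := hE.exponent_pos
  have he1 : e ≠ 1 := fun h => not_subsingleton G (Monoid.exp_eq_one_iff.1 h)
  set p := e.minFac
  have hp : p.Prime := Nat.minFac_prime he1
  have hq : 0 < e / p := Nat.div_pos (Nat.minFac_le he) hp.pos
  have hsplit : ∀ x : G, x ^ (e / p * p) = 1 := by
    rw [Nat.div_mul_cancel (Nat.minFac_dvd e)]; exact Monoid.pow_exponent_eq_one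
  refine (hZ.pow_eq_one_or_pow_eq_one hq hp.one_le hsplit).elim (fun h => ⟨p, hp, h⟩)
    fun h => ?_
  exact absurd (Monoid.exponent_min' _ hq h) (not_le.2 (Nat.div_lt_self he hp.one_lt))

end

/-- An infinite group `G` is `Z_mon`-cofinite if and only if either `G` has prime exponent
or `G` satisfies the weak cancellation law. -/
theorem stmt_0 {G : Type*} [Group G] [Infinite G] :
    ZmonCofinite G ↔ HasPrimeExponent G ∨ WCL G :=
  ⟨fun hZ => or_iff_not_imp_right.2 fun hW =>
      hZ.hasPrimeExponent (hZ.exponentExists_of_not_wcl hW),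
    fun h => h.elim ZmonCofinite.of_hasPrimeExponent ZmonCofinite.of_wcl⟩
end

section
/- An abelian group G is Z_mon-cofinite if and only if G is almost torsion-free or G has prime exponent. -/
/-- An abelian group `G` is `Z_mon`-cofinite if and only if `G` is almost torsion-free
or `G` has prime exponent. -/
theorem stmt_1 {G : Type*} [CommGroup G] :
    ZmonCofinite G ↔ AlmostTorsionFree G ∨ HasPrimeExponent G := by
  classical
  constructor
  · intro h
    by_cases hatf : AlmostTorsionFree G
    · exact Or.inl hatf
    right
    unfold AlmostTorsionFree at hatf
    push_neg at hatf
    obtain ⟨n, hn1, hninf⟩ := hatf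
    have hexp : ∀ x : G, x ^ n = 1 := by
      rcases h n hn1 1 with hfin | huniv
      · exact (hninf hfin).elim
      · intro x
        have : x ∈ {x : G | x ^ n = 1} := huniv ▸ Set.mem_univ x
        exact this
    have hex : ∃ m, 0 < m ∧ ∀ x : G, x ^ m = 1 := ⟨n, hn1, hexp⟩
    have hspec := Nat.find_spec hex
    set m := Nat.find hex with hm
    obtain ⟨hmpos, hmexp⟩ := hspec
    have hmin : ∀ k, k < m → ¬(0 < k ∧ ∀ x : G, x ^ k = 1) := fun k hk => Nat.find_min hex hk
    clear_value m
    clear hm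
    -- m ≥ 2
    have hGinf : ¬ (Set.univ : Set G).Finite := by
      intro hfin
      exact hninf (hfin.subset (Set.subset_univ _))
    have hm2 : 2 ≤ m := by
      rcases Nat.lt_or_ge m 2 with h2 | h2
      · interval_cases m
        exfalso
        apply hGinf
        have : (Set.univ : Set G) ⊆ {(1 : G)} := by
          intro x _
          simpa using hmexp x
        exact (Set.finite_singleton _).subset this
      · exact h2
    have hprime : m.Prime := by
      by_contra hnp
      obtain ⟨a, ha, ha2, halt⟩ := Nat.exists_dvd_of_not_prime2 hm2 hnp
      obtain ⟨b, hab⟩ := ha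
      have hapos : 0 < a := by omega
      have hbpos : 0 < b := by
        rcases Nat.eq_zero_or_pos b with rfl | hb0
        · simp at hab; omega
        · exact hb0
      have hblt : b < m := by
        calc b = 1 * b := (one_mul b).symm
        _ < a * b := (Nat.mul_lt_mul_right hbpos).mpr (by omega)
        _ = m := hab.symm
      have hGb : {x : G | x ^ b = 1}.Finite := by
        rcases h b hbpos 1 with hfin | huniv
        · exact hfin
        · exfalso
          refine hmin b hblt ⟨hbpos, fun x => ?_⟩
          have : x ∈ {x : G | x ^ b = 1} := huniv ▸ Set.mem_univ x
          exact this
      have hfa : ∀ g : G, {x : G | x ^ a = g}.Finite := by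
        intro g
        rcases h a hapos g with hfin | huniv
        · exact hfin
        · exfalso
          have h1 : (1 : G) ∈ {x : G | x ^ a = g} := huniv ▸ Set.mem_univ _
          have hg1 : g = 1 := by simpa using h1.symm
          refine hmin a halt ⟨hapos, fun x => ?_⟩
          have : x ∈ {x : G | x ^ a = g} := huniv ▸ Set.mem_univ x
          rw [hg1] at this
          exact this
      apply hGinf
      have hcover : (Set.univ : Set G) ⊆ ⋃ g ∈ {x : G | x ^ b = 1}, {x : G | x ^ a = g} := by
        intro x _
        have hxb : x ^ a ∈ {x : G | x ^ b = 1} := by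
          show (x ^ a) ^ b = 1
          rw [← pow_mul, ← hab, hmexp]
        exact Set.mem_biUnion hxb rfl
      exact (Set.Finite.biUnion hGb (fun g _ => hfa g)).subset hcover
    exact ⟨m, hprime, hmexp⟩
  · intro h n hn g
    rcases h with hatf | ⟨p, hp, hxp⟩
    · left
      rcases Set.eq_empty_or_nonempty {x : G | x ^ n = g} with he | ⟨x0, hx0⟩
      · simp [he]
      · have hsub : {x : G | x ^ n = g} ⊆ (fun y => x0 * y) '' {x : G | x ^ n = 1} := by
          intro x hx
          refine ⟨x0⁻¹ * x, ?_, by group⟩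
          have : (x0⁻¹ * x) ^ n = x0⁻¹ ^ n * x ^ n := mul_pow _ _ _
          simp only [Set.mem_setOf_eq] at hx hx0 ⊢
          rw [this, hx, inv_pow, hx0, inv_mul_cancel]
        exact ((hatf n hn).image _).subset hsub
    · by_cases hd : p ∣ n
      · obtain ⟨k, hk⟩ := hd
        have hall : ∀ x : G, x ^ n = 1 := by
          intro x
          rw [hk, pow_mul, hxp, one_pow]
        by_cases hg : g = 1
        · right
          ext x
          simp [hall x, hg]
        · left
          have : {x : G | x ^ n = g} = ∅ := by
            ext x
            simp only [Set.mem_setOf_eq, Set.mem_empty_iff_false, iff_false]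
            rw [hall x]
            exact fun h1 => hg h1.symm
          simp [this]
      · left
        apply Set.Subsingleton.finite
        intro x hx y hy
        have h1 : (x * y⁻¹) ^ n = 1 := by
          simp only [Set.mem_setOf_eq] at hx hy
          rw [mul_pow, inv_pow, hx, hy, mul_inv_cancel]
        have h2 : (x * y⁻¹) ^ p = 1 := hxp _
        have hco : Nat.Coprime p n := (Nat.Prime.coprime_iff_not_dvd hp).mpr hd
        have : orderOf (x * y⁻¹) ∣ Nat.gcd p n :=
          Nat.dvd_gcd (orderOf_dvd_of_pow_eq_one h2) (orderOf_dvd_of_pow_eq_one h1)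
        rw [hco] at this
        have := orderOf_eq_one_iff.mp (Nat.dvd_one.mp this)
        have := mul_inv_eq_one.mp this
        exact this
end

section
/- A group G satisfies the weak cancellation law (WCL) if and only if G is almost torsion-free and Z_mon-cofinite. -/
/-- A group `G` satisfies the weak cancellation law if and only if `G` is almost
torsion-free and `Z_mon`-cofinite. -/
theorem stmt_4 {G : Type*} [Group G] :
    WCL G ↔ AlmostTorsionFree G ∧ ZmonCofinite G := by
  constructor
  · intro h
    exact ⟨fun n hn => h n hn 1, fun n hn g => Or.inl (h n hn g)⟩
  · rintro ⟨hatf, hz⟩ n hn a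
    rcases hz n hn a with hf | huniv
    · exact hf
    · have ha : a = 1 := by
        have : (1 : G) ∈ {x : G | x ^ n = a} := huniv ▸ Set.mem_univ 1
        simpa using this.symm
      subst ha
      exact hatf n hn
end

section
/- Let G be a group such that both the center Z(G) and the quotient G/Z(G) satisfy the weak cancellation law (WCL). Then G satisfies WCL. -/
/-!
Map the `n`-th roots of `a` to `G ⧸ Z` for a central subgroup `Z`: they land among the finitely
many `n`-th roots of the image of `a`. Two roots `x₀, x` in the same fibre differ by an element
`z = x₀⁻¹ * x` of `Z`, and since `z` commutes with `x₀` we get `a = x₀ ^ n * z ^ n`, so `z ^ n = 1`.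
Hence each fibre is a translate of a subset of the finite `n`-torsion of `Z`.
-/

open Subgroup

theorem WCL.almostTorsionFree {G : Type*} [Group G] (h : WCL G) : AlmostTorsionFree G :=
  fun n hn => h n hn 1

section CentralSubgroup

variable {G : Type*} [Group G] {Z : Subgroup G} {n : ℕ} {a x₀ : G}

theorem inv_mul_pow_eq_one_of_le_center (hZ : Z ≤ center G) {x : G}
    (hx₀ : x₀ ^ n = a) (hx : x ^ n = a) (hmem : x₀⁻¹ * x ∈ Z) : (x₀⁻¹ * x) ^ n = 1 := by
  have hcomm : Commute x₀ (x₀⁻¹ * x) := mem_center_iff.mp (hZ hmem) x₀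
  have hsplit : x₀ ^ n * (x₀⁻¹ * x) ^ n = x₀ ^ n := by
    rw [← hcomm.mul_pow, mul_inv_cancel_left, hx, hx₀]
  exact mul_eq_left.mp hsplit

theorem setOf_pow_eq_inter_fiber_subset (hZ : Z ≤ center G) (hx₀ : x₀ ^ n = a) :
    {x : G | x ^ n = a} ∩ (QuotientGroup.mk : G → G ⧸ Z) ⁻¹' {(x₀ : G ⧸ Z)} ⊆
      (x₀ * ·) '' (Subtype.val '' {z : Z | z ^ n = 1}) := by
  rintro x ⟨hx, hfiber⟩
  have hmem : x₀⁻¹ * x ∈ Z := QuotientGroup.eq.mp hfiber.symm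
  refine ⟨x₀⁻¹ * x, ⟨⟨x₀⁻¹ * x, hmem⟩, ?_, rfl⟩, mul_inv_cancel_left x₀ x⟩
  exact Subtype.ext (inv_mul_pow_eq_one_of_le_center hZ hx₀ hx hmem)

theorem WCL.of_le_center [Z.Normal] (hZ : Z ≤ center G) (hZtors : AlmostTorsionFree Z)
    (hquot : WCL (G ⧸ Z)) : WCL G := by
  intro n hn a
  refine Set.Finite.of_finite_fibers (QuotientGroup.mk : G → G ⧸ Z) ?_ ?_
  · refine (hquot n hn a).subset ?_
    rintro _ ⟨x, hx, rfl⟩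
    exact congrArg QuotientGroup.mk (hx : x ^ n = a)
  · rintro _ ⟨x₀, hx₀, rfl⟩
    exact (((hZtors n hn).image _).image _).subset (setOf_pow_eq_inter_fiber_subset hZ hx₀)

end CentralSubgroup

/-- If both the center `Z(G)` and the quotient `G/Z(G)` satisfy the weak cancellation
law, then so does `G`. -/
theorem stmt_5 {G : Type*} [Group G]
    (h₁ : WCL (Subgroup.center G)) (h₂ : WCL (G ⧸ Subgroup.center G)) :
    WCL G :=
  WCL.of_le_center le_rfl h₁.almostTorsionFree h₂
end

section
/- Let G be a group satisfying the weak cancellation law (WCL) and let N be a finite normal subgroup of G. Then the quotient group G/N satisfies WCL. -/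
theorem MonoidHom.finite_preimage_singleton {G H : Type*} [Group G] [Group H] (f : G →* H)
    (hf : (f.ker : Set G).Finite) (h : H) : (f ⁻¹' {h}).Finite := by
  rcases (f ⁻¹' {h}).eq_empty_or_nonempty with hempty | ⟨b, hb⟩
  · simp [hempty]
  -- a nonempty fibre is the translate `b • ker f`
  refine (hf.preimage (mul_right_injective b⁻¹).injOn).subset fun x (hx : f x = h) => ?_
  change f (b⁻¹ * x) = 1
  rw [map_mul, map_inv, hb, hx, inv_mul_cancel]

theorem WCL.finite_setOf_pow_mem {G : Type*} [Group G] (hG : WCL G) {n : ℕ} (hn : 1 ≤ n)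
    {s : Set G} (hs : s.Finite) : {x : G | x ^ n ∈ s}.Finite :=
  hs.preimage' fun a _ => hG n hn a

theorem WCL.of_surjective {G H : Type*} [Group G] [Group H] (hG : WCL G) (f : G →* H)
    (hsurj : Function.Surjective f) (hker : (f.ker : Set G).Finite) : WCL H := by
  intro n hn a
  refine ((hG.finite_setOf_pow_mem hn (f.finite_preimage_singleton hker a)).image f).subset ?_
  intro y (hy : y ^ n = a)
  obtain ⟨x, rfl⟩ := hsurj y
  exact ⟨x, by simpa [← map_pow] using hy, rfl⟩

/-- If `G` satisfies the weak cancellation law and `N` is a finite normal subgroup of `G`,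
then the quotient `G/N` satisfies the weak cancellation law. -/
theorem stmt_6 {G : Type*} [Group G] (hG : WCL G)
    (N : Subgroup G) [N.Normal] (hN : (N : Set G).Finite) :
    WCL (G ⧸ N) :=
  hG.of_surjective (QuotientGroup.mk' N) (QuotientGroup.mk'_surjective N)
    (by rwa [QuotientGroup.ker_mk'])
end

section
/- Let G = G₁ × G₂ be an infinite direct product of two groups. Then G is Z_mon-cofinite if and only if either both G₁ and G₂ satisfy the weak cancellation law (WCL), or there exists a prime p such that both G₁ and G₂ have exponent p (i.e. x^p = 1 for all their elements). -/
/-- Key lemma: an infinite `Z_mon`-cofinite group of finite exponent `n ≥ 2`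
has prime exponent. -/
lemma key_prime_exp {G : Type*} [Group G] [Infinite G] (hZ : ZmonCofinite G) :
    ∀ n : ℕ, 2 ≤ n → (∀ x : G, x ^ n = 1) → ∃ p : ℕ, p.Prime ∧ ∀ x : G, x ^ p = 1 := by
  intro n
  induction n using Nat.strong_induction_on with
  | _ n ih =>
    intro hn hexp
    have hp : n.minFac.Prime := Nat.minFac_prime (by omega)
    obtain ⟨m, hm⟩ : n.minFac ∣ n := Nat.minFac_dvd n
    by_cases hm1 : m = 1
    · have hn' : n = n.minFac := by conv_lhs => rw [hm, hm1, mul_one]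
      exact ⟨n.minFac, hp, fun x => by rw [← hn']; exact hexp x⟩
    have hm0 : m ≠ 0 := by rintro rfl; simp at hm; omega
    have hm2 : 2 ≤ m := by omega
    have hmlt : m < n := by
      have hp2 : 2 ≤ n.minFac := hp.two_le
      calc m < 2 * m := by omega
        _ ≤ n.minFac * m := Nat.mul_le_mul_right m hp2
        _ = n := hm.symm
    rcases hZ m (by omega) 1 with hfin | huniv
    · -- all fibers of `x ↦ x ^ m` are finite
      have hfib : ∀ a : G, {x : G | x ^ m = a}.Finite := by
        intro a
        rcases hZ m (by omega) a with h | h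
        · exact h
        · exfalso
          have h1 : (1 : G) ∈ {x : G | x ^ m = a} := h ▸ Set.mem_univ _
          have ha : a = 1 := by simpa using h1.symm
          subst ha
          exact Set.infinite_univ (h ▸ hfin)
      have hrange : (Set.range (fun x : G => x ^ m)).Infinite := by
        intro hfinr
        have hfu : (Set.univ : Set G).Finite := by
          refine Set.Finite.subset (hfinr.biUnion (fun a _ => hfib a)) ?_
          intro x _
          exact Set.mem_biUnion (Set.mem_range_self x) rfl
        exact Set.infinite_univ hfu
      have hsub : Set.range (fun x : G => x ^ m) ⊆ {y : G | y ^ n.minFac = 1} := by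
        rintro _ ⟨x, rfl⟩
        show (x ^ m) ^ n.minFac = 1
        rw [← pow_mul, mul_comm, ← hm]
        exact hexp x
      have hinf : {y : G | y ^ n.minFac = 1}.Infinite := hrange.mono hsub
      rcases hZ n.minFac hp.one_lt.le 1 with h | h
      · exact (hinf h).elim
      · exact ⟨n.minFac, hp, fun x => Set.eq_univ_iff_forall.mp h x⟩
    · have hexp' : ∀ x : G, x ^ m = 1 := fun x => Set.eq_univ_iff_forall.mp huniv x
      exact ih m hmlt hm2 hexp'

/-- Groups of exponent a prime `p` are `Z_mon`-cofinite. -/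
lemma primeExp_cofinite {G : Type*} [Group G] {p : ℕ} (hp : p.Prime)
    (hexp : ∀ x : G, x ^ p = 1) : ZmonCofinite G := by
  intro n hn g
  by_cases hdvd : p ∣ n
  · obtain ⟨k, rfl⟩ := hdvd
    by_cases hg : g = 1
    · subst hg
      right
      ext x
      simp [pow_mul, hexp x]
    · left
      have he : {x : G | x ^ (p * k) = g} = ∅ := by
        ext x
        simp [pow_mul, hexp x, Ne.symm hg]
      rw [he]; exact Set.finite_empty
  · -- `n` coprime to `p`; Bezout gives at most one solution
    left
    have hcop : Nat.Coprime n p := (hp.coprime_iff_not_dvd.mpr hdvd).symm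
    have hg1 : Nat.gcd n p = 1 := hcop
    have hb : (1 : ℤ) = n * Nat.gcdA n p + p * Nat.gcdB n p := by
      have h := Nat.gcd_eq_gcd_ab n p
      rw [hg1] at h
      push_cast at h
      exact h
    apply Set.Finite.subset (Set.finite_singleton (g ^ Nat.gcdA n p))
    intro x hx
    simp only [Set.mem_setOf_eq] at hx
    have hxg : x = g ^ Nat.gcdA n p := by
      calc x = x ^ (1 : ℤ) := (zpow_one x).symm
        _ = x ^ ((n : ℤ) * Nat.gcdA n p + (p : ℤ) * Nat.gcdB n p) := by rw [← hb]
        _ = (x ^ (n : ℤ)) ^ Nat.gcdA n p * (x ^ (p : ℤ)) ^ Nat.gcdB n p := by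
              rw [zpow_add, zpow_mul, zpow_mul]
        _ = g ^ Nat.gcdA n p := by
              rw [zpow_natCast, zpow_natCast, hx, hexp, one_zpow, mul_one]
    simp [hxg]

/-- An infinite direct product `G₁ × G₂` is `Z_mon`-cofinite if and only if either both
factors satisfy the weak cancellation law, or there is a prime `p` such that both
factors have exponent `p`. -/
theorem stmt_7 {G₁ G₂ : Type*} [Group G₁] [Group G₂] [Infinite (G₁ × G₂)] :
    ZmonCofinite (G₁ × G₂) ↔
      (WCL G₁ ∧ WCL G₂) ∨
      ∃ p : ℕ, p.Prime ∧ (∀ x : G₁, x ^ p = 1) ∧ (∀ y : G₂, y ^ p = 1) := by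
  constructor
  · intro hZ
    by_cases h1 : WCL G₁ ∧ WCL G₂
    · exact Or.inl h1
    right
    have hstep : ∃ n : ℕ, 2 ≤ n ∧ ∀ z : G₁ × G₂, z ^ n = 1 := by
      rcases not_and_or.mp h1 with h | h
      · unfold WCL at h
        push_neg at h
        obtain ⟨n, hn, a, hinfS⟩ := h
        have hinfS' : {x : G₁ | x ^ n = a}.Infinite := hinfS
        have hinj : Set.InjOn (fun x : G₁ => (x, (1 : G₂))) {x | x ^ n = a} :=
          fun x _ y _ h => congrArg Prod.fst h
        have himg : {z : G₁ × G₂ | z ^ n = (a, 1)}.Infinite := by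
          refine Set.Infinite.mono ?_ (hinfS'.image hinj)
          rintro _ ⟨x, hx, rfl⟩
          show (x, (1 : G₂)) ^ n = (a, 1)
          rw [Prod.pow_mk, one_pow, hx]
        have huniv := (hZ n hn (a, 1)).resolve_left himg
        have hall : ∀ z : G₁ × G₂, z ^ n = (a, 1) :=
          fun z => Set.eq_univ_iff_forall.mp huniv z
        have ha : a = 1 := by simpa using (congrArg Prod.fst (hall (1, 1))).symm
        have hn2 : 2 ≤ n := by
          by_contra h2
          push_neg at h2
          have hne : n = 1 := by omega
          subst hne
          apply hinfS'
          have hsing : {x : G₁ | x ^ 1 = a} = {a} := by ext x; simp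
          rw [hsing]; exact Set.finite_singleton a
        exact ⟨n, hn2, fun z => by rw [hall z, ha]; rfl⟩
      · unfold WCL at h
        push_neg at h
        obtain ⟨n, hn, a, hinfS⟩ := h
        have hinfS' : {y : G₂ | y ^ n = a}.Infinite := hinfS
        have hinj : Set.InjOn (fun y : G₂ => ((1 : G₁), y)) {y | y ^ n = a} :=
          fun x _ y _ h => congrArg Prod.snd h
        have himg : {z : G₁ × G₂ | z ^ n = (1, a)}.Infinite := by
          refine Set.Infinite.mono ?_ (hinfS'.image hinj)
          rintro _ ⟨y, hy, rfl⟩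
          show ((1 : G₁), y) ^ n = (1, a)
          rw [Prod.pow_mk, one_pow, hy]
        have huniv := (hZ n hn (1, a)).resolve_left himg
        have hall : ∀ z : G₁ × G₂, z ^ n = (1, a) :=
          fun z => Set.eq_univ_iff_forall.mp huniv z
        have ha : a = 1 := by simpa using (congrArg Prod.snd (hall (1, 1))).symm
        have hn2 : 2 ≤ n := by
          by_contra h2
          push_neg at h2
          have hne : n = 1 := by omega
          subst hne
          apply hinfS'
          have hsing : {y : G₂ | y ^ 1 = a} = {a} := by ext y; simp
          rw [hsing]; exact Set.finite_singleton a
        exact ⟨n, hn2, fun z => by rw [hall z, ha]; rfl⟩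
    obtain ⟨n, hn2, hexp⟩ := hstep
    obtain ⟨p, hp, hpe⟩ := key_prime_exp hZ n hn2 hexp
    refine ⟨p, hp, fun x => ?_, fun y => ?_⟩
    · simpa using congrArg Prod.fst (hpe (x, 1))
    · simpa using congrArg Prod.snd (hpe (1, y))
  · rintro (⟨h1, h2⟩ | ⟨p, hp, he1, he2⟩)
    · intro n hn g
      left
      have hsub : {z : G₁ × G₂ | z ^ n = g} ⊆
          {x : G₁ | x ^ n = g.1} ×ˢ {y : G₂ | y ^ n = g.2} := by
        intro z hz
        exact ⟨by simpa using congrArg Prod.fst hz, by simpa using congrArg Prod.snd hz⟩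
      exact ((h1 n hn g.1).prod (h2 n hn g.2)).subset hsub
    · refine primeExp_cofinite hp (fun z => ?_)
      rw [Prod.ext_iff]
      constructor
      · simpa using he1 z.1
      · simpa using he2 z.2
end

section
/- An infinite group G is Z-cofinite if and only if every countable subgroup of G is Z-cofinite. -/
/-- `G` is `Z`-cofinite: every elementary algebraic subset of `G`, i.e. every set of the form
`{x | g₁ x^{ε₁} ⋯ g_n x^{ε_n} = 1}` with `εᵢ ∈ {1,-1}`, encoded by a list of pairs
`(gᵢ, εᵢ)`, is either finite or all of `G`. -/
def ZCofinite (G : Type*) [Group G] : Prop :=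
  ∀ w : List (G × ℤ), (∀ p ∈ w, p.2 = 1 ∨ p.2 = -1) →
    {x : G | (w.map (fun p => p.1 * x ^ p.2)).prod = 1}.Finite ∨
    {x : G | (w.map (fun p => p.1 * x ^ p.2)).prod = 1} = Set.univ

/-! Elementary algebraic sets pull back along injective homomorphisms, so `Z`-cofiniteness
passes to every subgroup. Conversely, if an elementary algebraic set `S` of `G` is infinite and
misses a point `x`, let `H` be the subgroup generated by the coefficients, a countably infinite
part of `S`, and `x`: then `H` is countable and `S ∩ H` is an elementary algebraic set of `H`
that is infinite and misses `x`. -/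

open Function

theorem Subgroup.countable_closure {G : Type*} [Group G] {s : Set G} (hs : s.Countable) :
    Countable (Subgroup.closure s) := by
  have := hs.to_subtype
  rw [← Subtype.range_coe (s := s), ← FreeGroup.range_lift_eq_closure]
  exact (FreeGroup.lift _).rangeRestrict_surjective.countable

theorem Subgroup.exists_list_map_subtype_eq {G α : Type*} [Group G] (H : Subgroup G)
    (w : List (G × α)) (hw : ∀ p ∈ w, p.1 ∈ H) :
    ∃ w' : List (H × α), w'.map (Prod.map H.subtype id) = w := by
  have : w ∈ Set.range (List.map (Prod.map H.subtype id)) := by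
    rw [Set.range_list_map]
    exact fun p hp => ⟨(⟨p.1, hw p hp⟩, p.2), rfl⟩
  exact this

section

variable {G K : Type*} [Group G] [Group K]

def elementaryAlgebraicSet (w : List (G × ℤ)) : Set G :=
  {x | (w.map fun p => p.1 * x ^ p.2).prod = 1}

theorem zCofinite_iff : ZCofinite G ↔ ∀ w : List (G × ℤ), (∀ p ∈ w, p.2 = 1 ∨ p.2 = -1) →
    (elementaryAlgebraicSet w).Finite ∨ elementaryAlgebraicSet w = Set.univ :=
  Iff.rfl

theorem preimage_elementaryAlgebraicSet {f : G →* K} (hf : Injective f) (w : List (G × ℤ)) :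
    f ⁻¹' elementaryAlgebraicSet (w.map (Prod.map f id)) = elementaryAlgebraicSet w := by
  ext y
  simp [elementaryAlgebraicSet, List.map_map, ← map_eq_one_iff f hf, map_list_prod, comp_def]

namespace ZCofinite

theorem of_injective {f : G →* K} (hf : Injective f) (hK : ZCofinite K) : ZCofinite G := by
  refine zCofinite_iff.2 fun w hw => ?_
  rw [← preimage_elementaryAlgebraicSet hf w]
  rcases zCofinite_iff.1 hK _ (List.forall_mem_map (f := Prod.map f id) |>.2 hw) with
    hfin | huniv
  · exact .inl (hfin.preimage hf.injOn)
  · exact .inr (by rw [huniv, Set.preimage_univ])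

theorem subgroup (hG : ZCofinite G) (H : Subgroup G) : ZCofinite H :=
  of_injective H.subtype_injective hG

theorem of_forall_countable_subgroup (h : ∀ H : Subgroup G, Countable H → ZCofinite H) :
    ZCofinite G := by
  refine zCofinite_iff.2 fun w hw => ?_
  by_contra! ⟨hinf, hne⟩
  obtain ⟨x, hx⟩ := (Set.ne_univ_iff_exists_notMem _).1 hne
  obtain ⟨t, htS, htc, htinf⟩ := hinf.exists_subset_countable_infinite
  set H := Subgroup.closure (Prod.fst '' {p | p ∈ w} ∪ t ∪ {x})
  have hH : Countable H := Subgroup.countable_closure <|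
    ((w.finite_toSet.image _).countable.union htc).union (Set.countable_singleton x)
  have hwH : ∀ p ∈ w, p.1 ∈ H := fun p hp => Subgroup.subset_closure (.inl (.inl ⟨p, hp, rfl⟩))
  have htH : t ⊆ H := fun y hy => Subgroup.subset_closure (.inl (.inr hy))
  have hxH : x ∈ H := Subgroup.subset_closure (.inr rfl)
  clear_value H
  obtain ⟨w', rfl⟩ := H.exists_list_map_subtype_eq w hwH
  have hpre := preimage_elementaryAlgebraicSet H.subtype_injective w'
  rcases zCofinite_iff.1 (h H hH) w' (List.forall_mem_map.1 hw) with hfin | huniv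
  · refine htinf ((hfin.image H.subtype).subset fun y hy => ?_)
    exact ⟨⟨y, htH hy⟩, hpre ▸ htS hy, rfl⟩
  · exact hx ((hpre.trans huniv).ge (Set.mem_univ ⟨x, hxH⟩))

end ZCofinite

end

theorem stmt_8_general {G : Type*} [Group G] :
    ZCofinite G ↔ ∀ H : Subgroup G, Countable H → ZCofinite H :=
  ⟨fun hG H _ => hG.subgroup H, ZCofinite.of_forall_countable_subgroup⟩

/-- An infinite group `G` is `Z`-cofinite if and only if every countable subgroup of `G`
is `Z`-cofinite. -/
theorem stmt_8 {G : Type*} [Group G] [Infinite G] :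
    ZCofinite G ↔ ∀ H : Subgroup G, Countable H → ZCofinite H :=
  stmt_8_general
end

section
/- Let G be an infinite non-abelian group that is C'-cofinite. Then: (1) the center Z(G) is finite; (2) G has no infinite abelian subgroup; (3) every element g ∈ G not in Z(G) has finite centralizer C_G(g), hence the index [G : C_G(g)] is infinite and g has infinitely many conjugates in G; and (4) G is a torsion group. -/
/-- `G` is `C'`-cofinite: the centralizer of every element is either finite or all of `G`. -/
def CprimeCofinite (G : Type*) [Group G] : Prop :=
  ∀ g : G, {x : G | x * g = g * x}.Finite ∨ {x : G | x * g = g * x} = Set.univ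

/-- Let `G` be an infinite non-abelian `C'`-cofinite group. Then: (1) `Z(G)` is finite;
(2) `G` has no infinite abelian subgroup; (3) every non-central `g` has finite
centralizer, infinite index of the centralizer, and infinitely many conjugates;
(4) `G` is torsion. -/
theorem stmt_9 {G : Type*} [Group G] [Infinite G]
    (hna : ¬ ∀ a b : G, a * b = b * a) (hG : CprimeCofinite G) :
    ((Subgroup.center G : Set G).Finite) ∧
    (∀ H : Subgroup G, (∀ a ∈ H, ∀ b ∈ H, a * b = b * a) → (H : Set G).Finite) ∧
    (∀ g : G, g ∉ Subgroup.center G →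
      {x : G | x * g = g * x}.Finite ∧
      Infinite (G ⧸ Subgroup.centralizer {g}) ∧
      {x : G | IsConj g x}.Infinite) ∧
    (∀ x : G, IsOfFinOrder x) := by
  -- basic: if S g = univ then g central
  have hcen : ∀ g : G, {x : G | x * g = g * x} = Set.univ → g ∈ Subgroup.center G := by
    intro g h
    rw [Subgroup.mem_center_iff]
    intro b
    have : b ∈ {x : G | x * g = g * x} := h ▸ Set.mem_univ b
    exact this
  -- part (3a)
  have h3a : ∀ g : G, g ∉ Subgroup.center G → {x : G | x * g = g * x}.Finite := by
    intro g hg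
    rcases hG g with h | h
    · exact h
    · exact absurd (hcen g h) hg
  -- part (1)
  push_neg at hna
  obtain ⟨a, b, hab⟩ := hna
  have ha : a ∉ Subgroup.center G := by
    intro h
    exact hab ((Subgroup.mem_center_iff.mp h b).symm)
  have h1 : (Subgroup.center G : Set G).Finite := by
    refine (h3a a ha).subset ?_
    intro z hz
    exact Subgroup.mem_center_iff.mp hz a |>.symm
  -- part (2)
  have h2 : ∀ H : Subgroup G, (∀ x ∈ H, ∀ y ∈ H, x * y = y * x) → (H : Set G).Finite := by
    intro H hH
    by_contra hinf
    have hsub : (H : Set G) ⊆ (Subgroup.center G : Set G) := by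
      intro h hh
      rcases hG h with hfin | huniv
      · exact absurd (hfin.subset fun x hx => (hH x hx h hh)) hinf
      · exact hcen h huniv
    exact hinf (h1.subset hsub)
  -- part (3)
  have h3 : ∀ g : G, g ∉ Subgroup.center G →
      {x : G | x * g = g * x}.Finite ∧
      Infinite (G ⧸ Subgroup.centralizer {g}) ∧
      {x : G | IsConj g x}.Infinite := by
    intro g hg
    have hfin := h3a g hg
    have hset : {x : G | x * g = g * x} = (Subgroup.centralizer {g} : Set G) := by
      ext x
      simp [Subgroup.mem_centralizer_iff, eq_comm]
    have hCfin : Finite (Subgroup.centralizer {g} : Set G) := (hset ▸ hfin).to_subtype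
    have hquot : Infinite (G ⧸ Subgroup.centralizer {g}) := by
      by_contra hq
      rw [not_infinite_iff_finite] at hq
      have : Finite G := Finite.of_equiv _ (Subgroup.groupEquivQuotientProdSubgroup (s := Subgroup.centralizer {g})).symm
      exact not_finite G
    refine ⟨hfin, hquot, ?_⟩
    -- injection from the quotient into the conjugacy class
    have hresp : ∀ x y : G, (QuotientGroup.leftRel (Subgroup.centralizer {g})) x y →
        x * g * x⁻¹ = y * g * y⁻¹ := by
      intro x y hxy
      rw [QuotientGroup.leftRel_apply] at hxy
      have := (Subgroup.mem_centralizer_iff.mp hxy) g rfl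
      -- g * (x⁻¹ * y) = (x⁻¹ * y) * g
      have h1' : x * (g * (x⁻¹ * y)) * y⁻¹ = x * ((x⁻¹ * y) * g) * y⁻¹ := by rw [this]
      group at h1' ⊢
      exact h1'
    let f : G ⧸ Subgroup.centralizer {g} → G :=
      Quotient.lift (fun x => x * g * x⁻¹) (fun x y h => hresp x y h)
    have hfi : Function.Injective f := by
      intro q1 q2
      induction q1 using Quotient.inductionOn
      induction q2 using Quotient.inductionOn
      rename_i x y
      intro hxy
      have hx : x * g * x⁻¹ = y * g * y⁻¹ := hxy
      have hmem : x⁻¹ * y ∈ Subgroup.centralizer {g} := by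
        refine Subgroup.mem_centralizer_iff.mpr ?_
        intro z hz
        rw [Set.mem_singleton_iff] at hz
        rw [hz]
        have h2' : g * (x⁻¹ * y) = x⁻¹ * (x * g * x⁻¹) * y := by group
        rw [h2', hx]
        group
      exact Quotient.sound (QuotientGroup.leftRel_apply.mpr hmem)
    refine Set.infinite_of_injective_forall_mem hfi ?_
    intro q
    induction q using Quotient.inductionOn
    rename_i x
    exact isConj_iff.mpr ⟨x, rfl⟩
  refine ⟨h1, h2, h3, ?_⟩
  -- part (4)
  intro x
  have hz : (Subgroup.zpowers x : Set G).Finite := by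
    apply h2
    intro a ha b hb
    obtain ⟨m, rfl⟩ := Subgroup.mem_zpowers_iff.mp ha
    obtain ⟨n, rfl⟩ := Subgroup.mem_zpowers_iff.mp hb
    rw [← zpow_add, ← zpow_add, add_comm]
  exact finite_zpowers.mp hz
end

section
/- Let H be a finite subgroup of an infinite C'-cofinite group G. Then either the normalizer N_G(H) is finite, or H is contained in the center Z(G). In particular, H is a normal subgroup of G if and only if H ≤ Z(G). -/
section

variable {G : Type*} [Group G]

theorem infinite_centralizer_of_mapsTo_conj {S T : Set G} (hS : S.Infinite) (hT : T.Finite)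
    {h : G} (hST : Set.MapsTo (fun s => s * h * s⁻¹) S T) :
    {x : G | x * h = h * x}.Infinite := by
  intro hC
  have fiber_finite (t : G) : {s ∈ S | s * h * s⁻¹ = t}.Finite := by
    rcases Set.eq_empty_or_nonempty {s ∈ S | s * h * s⁻¹ = t} with hempty | ⟨s₀, -, hs₀⟩
    · simp only [hempty, Set.finite_empty]
    refine (hC.image (s₀ * ·)).subset fun s ⟨_, hs⟩ => ⟨s₀⁻¹ * s, ?_, mul_inv_cancel_left s₀ s⟩
    have hconj : s * h * s⁻¹ = s₀ * h * s₀⁻¹ := hs.trans hs₀.symm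
    show s₀⁻¹ * s * h = h * (s₀⁻¹ * s)
    calc s₀⁻¹ * s * h = s₀⁻¹ * (s * h * s⁻¹) * s := by group
      _ = h * (s₀⁻¹ * s) := by rw [hconj]; group
  exact hS ((hT.biUnion fun t _ => fiber_finite t).subset
    fun s hs => Set.mem_biUnion (hST hs) ⟨hs, rfl⟩)

theorem infinite_centralizer_of_infinite_normalizer {H : Subgroup G} (hH : (H : Set G).Finite)
    (hN : (Subgroup.normalizer (H : Set G) : Set G).Infinite) {h : G} (hh : h ∈ H) :
    {x : G | x * h = h * x}.Infinite :=
  infinite_centralizer_of_mapsTo_conj hN hH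
    fun _ hn => (Subgroup.mem_normalizer_iff.mp hn h).mp hh

theorem CprimeCofinite.mem_center_of_infinite_centralizer (hG : CprimeCofinite G) {h : G}
    (hC : {x : G | x * h = h * x}.Infinite) : h ∈ Subgroup.center G :=
  Subgroup.mem_center_iff.mpr (Set.eq_univ_iff_forall.mp ((hG h).resolve_left hC))

theorem CprimeCofinite.le_center_of_infinite_normalizer (hG : CprimeCofinite G)
    {H : Subgroup G} (hH : (H : Set G).Finite)
    (hN : (Subgroup.normalizer (H : Set G) : Set G).Infinite) : H ≤ Subgroup.center G :=
  fun _ hh => hG.mem_center_of_infinite_centralizer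
    (infinite_centralizer_of_infinite_normalizer hH hN hh)

theorem Subgroup.normal_of_le_center {H : Subgroup G} (hH : H ≤ Subgroup.center G) :
    H.Normal :=
  ⟨fun h hh g => by rwa [Subgroup.mem_center_iff.mp (hH hh) g, mul_inv_cancel_right]⟩

end

/-- Let `H` be a finite subgroup of an infinite `C'`-cofinite group `G`. Then either the
normalizer `N_G(H)` is finite, or `H ≤ Z(G)`. In particular, `H` is normal in `G` if
and only if `H` is central. -/
theorem stmt_10 {G : Type*} [Group G] [Infinite G] (hG : CprimeCofinite G)
    (H : Subgroup G) (hH : (H : Set G).Finite) :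
    ((Subgroup.normalizer (H : Set G) : Set G).Finite ∨ H ≤ Subgroup.center G) ∧
    (H.Normal ↔ H ≤ Subgroup.center G) := by
  refine ⟨(Set.finite_or_infinite _).imp_right (hG.le_center_of_infinite_normalizer hH),
    fun hnormal => hG.le_center_of_infinite_normalizer hH ?_, Subgroup.normal_of_le_center⟩
  rw [Subgroup.normalizer_eq_top_iff.mpr hnormal, Subgroup.coe_top]
  exact Set.infinite_univ
end

section
/- Let G be an infinite non-abelian C'-cofinite group. Then the second center Z₂(G) coincides with the center Z(G). In particular, G has no infinite nilpotent subgroup. -/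
open Subgroup (centralizer center mem_centralizer_singleton_iff centralizer_eq_top_iff_subset
  center_le_centralizer)
open scoped commutatorElement

section Centralizer

variable {H : Type*} [Group H]

lemma inv_mul_mem_centralizer_of_commutatorElement_eq {x k k₀ : H} (h : ⁅k, x⁆ = ⁅k₀, x⁆) :
    k₀⁻¹ * k ∈ centralizer {x} := by
  rw [mem_centralizer_singleton_iff]
  simp only [commutatorElement_def, mul_left_inj] at h
  calc k₀⁻¹ * k * x = k₀⁻¹ * (k * x * k⁻¹) * k := by group
    _ = k₀⁻¹ * (k₀ * x * k₀⁻¹) * k := by rw [h]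
    _ = x * (k₀⁻¹ * k) := by group

lemma infinite_centralizer_of_commutatorElement_mem {K N : Set H} (hK : K.Infinite)
    (hN : N.Finite) {x : H} (hx : ∀ k ∈ K, ⁅k, x⁆ ∈ N) : (centralizer {x} : Set H).Infinite := by
  intro hC
  refine hK ((hN.preimage' fun c _ => ?_).subset hx)
  rcases Set.eq_empty_or_nonempty ((fun k : H => ⁅k, x⁆) ⁻¹' {c}) with hc | ⟨k₀, hk₀⟩
  · simp [hc]
  refine (hC.image (k₀ * ·)).subset fun k hk => ⟨k₀⁻¹ * k, ?_, by group⟩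
  exact inv_mul_mem_centralizer_of_commutatorElement_eq (hk.trans hk₀.symm)

lemma infinite_centralizer_of_infinite_upperCentralSeries (x : H) :
    ∀ n, (Subgroup.upperCentralSeries H n : Set H).Infinite → (centralizer {x} : Set H).Infinite
  | 0, hinf => absurd (by simp [Subgroup.upperCentralSeries_zero]) hinf
  | n + 1, hinf => by
    by_cases hn : (Subgroup.upperCentralSeries H n : Set H).Finite
    · exact infinite_centralizer_of_commutatorElement_mem hinf hn
        fun k hk => Subgroup.mem_upperCentralSeries_succ_iff.mp hk x
    · exact infinite_centralizer_of_infinite_upperCentralSeries x n hn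

lemma Group.IsNilpotent.infinite_centralizer [Infinite H] [Group.IsNilpotent H] (x : H) :
    (centralizer {x} : Set H).Infinite := by
  obtain ⟨n, hn⟩ := Group.IsNilpotent.nilpotent H
  exact infinite_centralizer_of_infinite_upperCentralSeries x n (by simp [hn, Set.infinite_univ])

end Centralizer

namespace CprimeCofinite

variable {G : Type*} [Group G]

lemma mem_center_of_infinite_centralizer_s11 (hG : CprimeCofinite G) {g : G}
    (hg : (centralizer {g} : Set G).Infinite) : g ∈ center G := by
  have hC : {x : G | x * g = g * x} = (centralizer {g} : Set G) := by
    ext; simp [mem_centralizer_singleton_iff]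
  rcases hG g with hfin | huniv
  · exact absurd (hC ▸ hfin) hg
  · rw [hC, ← Subgroup.coe_top, SetLike.coe_set_eq, centralizer_eq_top_iff_subset] at huniv
    exact huniv rfl

lemma finite_center (hG : CprimeCofinite G) {g : G} (hg : g ∉ center G) :
    (center G : Set G).Finite :=
  (Set.not_infinite.mp (mt hG.mem_center_of_infinite_centralizer_s11 hg)).subset
    (center_le_centralizer _)

lemma upperCentralSeries_two_eq_center [Infinite G] (hG : CprimeCofinite G)
    (hZ : (center G : Set G).Finite) : Subgroup.upperCentralSeries G 2 = center G := by
  refine le_antisymm (fun x hx => hG.mem_center_of_infinite_centralizer_s11 ?_) ?_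
  · refine infinite_centralizer_of_commutatorElement_mem Set.infinite_univ hZ fun k _ => ?_
    rw [← commutatorElement_inv, ← Subgroup.upperCentralSeries_one]
    exact inv_mem (Subgroup.mem_upperCentralSeries_succ_iff.mp hx k)
  · exact Subgroup.upperCentralSeries_one G ▸ Subgroup.upperCentralSeries_mono G one_le_two

lemma le_center_of_isNilpotent (hG : CprimeCofinite G) (H : Subgroup G) [Infinite H]
    [Group.IsNilpotent H] : H ≤ center G := by
  intro x hx
  refine hG.mem_center_of_infinite_centralizer_s11 ?_
  refine Set.infinite_of_injOn_mapsTo Subtype.val_injective.injOn (fun y hy => ?_)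
    (Group.IsNilpotent.infinite_centralizer (⟨x, hx⟩ : H))
  exact mem_centralizer_singleton_iff.mpr
    (congrArg Subtype.val (mem_centralizer_singleton_iff.mp hy))

end CprimeCofinite

/-- Let `G` be an infinite non-abelian `C'`-cofinite group. Then the second center of `G`
coincides with the center, and `G` has no infinite nilpotent subgroup. -/
theorem stmt_11 {G : Type*} [Group G] [Infinite G]
    (hna : ¬ ∀ a b : G, a * b = b * a) (hG : CprimeCofinite G) :
    upperCentralSeries G 2 = Subgroup.center G ∧
    (∀ H : Subgroup G, Group.IsNilpotent H → (H : Set G).Finite) := by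
  obtain ⟨a, b, hab⟩ : ∃ a b : G, a * b ≠ b * a := by simpa using hna
  have hZ : (center G : Set G).Finite :=
    hG.finite_center fun hb => hab (Subgroup.mem_center_iff.mp hb a)
  refine ⟨hG.upperCentralSeries_two_eq_center hZ, fun H hH => ?_⟩
  by_contra hinf
  have : Infinite H := Set.infinite_coe_iff.mpr hinf
  exact hinf (hZ.subset (hG.le_center_of_isNilpotent H))
end

section
/- Let G be an infinite non-abelian C'-cofinite group. Then every term G^(n) of the derived series of G is infinite. In particular, G has no infinite solvable subgroup. -/
/-- Key lemma: in an infinite non-abelian C'-cofinite group, the commutator subgroup of any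
infinite subgroup is infinite. -/
theorem aux_comm_infinite {G : Type*} [Group G]
    (hna : ¬ ∀ a b : G, a * b = b * a) (hG : CprimeCofinite G)
    (H : Subgroup G) (hH : (H : Set G).Infinite) :
    ((⁅H, H⁆ : Subgroup G) : Set G).Infinite := by
  by_contra hfin
  rw [Set.not_infinite] at hfin
  push_neg at hna
  obtain ⟨a, b, hab⟩ := hna
  have hZ : {x : G | x * a = a * x}.Finite := by
    rcases hG a with h | h
    · exact h
    · exfalso
      have hb : b ∈ {x : G | x * a = a * x} := h ▸ Set.mem_univ b
      exact hab hb.symm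
  have hex : ∃ g ∈ H, {x : G | x * g = g * x}.Finite := by
    by_contra hc
    push_neg at hc
    have hsub : (H : Set G) ⊆ {x : G | x * a = a * x} := by
      intro g hg
      rcases hG g with h | h
      · exact absurd h (hc g hg)
      · have ha : a ∈ {x : G | x * g = g * x} := h ▸ Set.mem_univ a
        exact ha.symm
    exact hH (hZ.subset hsub)
  obtain ⟨g, hgH, hCg⟩ := hex
  have hfiber : ∀ k : G, {h : G | h * g * h⁻¹ * g⁻¹ = k}.Finite := by
    intro k
    rcases Set.eq_empty_or_nonempty {h : G | h * g * h⁻¹ * g⁻¹ = k} with he | ⟨h₀, hh₀⟩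
    · simp [he]
    · apply Set.Finite.subset (hCg.image (fun x => h₀ * x))
      intro h hh
      refine ⟨h₀⁻¹ * h, ?_, by group⟩
      have e : h * g * h⁻¹ = h₀ * g * h₀⁻¹ :=
        mul_right_cancel ((hh : _ = k).trans (hh₀ : _ = k).symm)
      show (h₀⁻¹ * h) * g = g * (h₀⁻¹ * h)
      have e2 : h₀⁻¹ * (h * g * h⁻¹) * h = h₀⁻¹ * (h₀ * g * h₀⁻¹) * h := by rw [e]
      calc (h₀⁻¹ * h) * g = h₀⁻¹ * (h * g * h⁻¹) * h := by group
        _ = h₀⁻¹ * (h₀ * g * h₀⁻¹) * h := e2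
        _ = g * (h₀⁻¹ * h) := by group
  have hcover : (H : Set G) ⊆
      ⋃ k ∈ ((⁅H, H⁆ : Subgroup G) : Set G), {h : G | h * g * h⁻¹ * g⁻¹ = k} := by
    intro h hh
    have hk : h * g * h⁻¹ * g⁻¹ ∈ (⁅H, H⁆ : Subgroup G) :=
      Subgroup.commutator_mem_commutator hh hgH
    exact Set.mem_biUnion hk rfl
  exact hH (Set.Finite.subset (Set.Finite.biUnion hfin (fun k _ => hfiber k)) hcover)

/-- Let `G` be an infinite non-abelian `C'`-cofinite group. Then every term of the derived
series of `G` is infinite; in particular `G` has no infinite solvable subgroup. -/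
theorem stmt_12 {G : Type*} [Group G] [Infinite G]
    (hna : ¬ ∀ a b : G, a * b = b * a) (hG : CprimeCofinite G) :
    (∀ n : ℕ, (derivedSeries G n : Set G).Infinite) ∧
    (∀ H : Subgroup G, IsSolvable H → (H : Set G).Finite) := by
  constructor
  · intro n
    induction n with
    | zero => simpa using Set.infinite_univ
    | succ n ih =>
      rw [derivedSeries_succ]
      exact aux_comm_infinite hna hG _ ih
  · intro H hs
    by_contra hinf
    have hinf' : (H : Set G).Infinite := hinf
    obtain ⟨n, hn⟩ := hs
    have key : ∀ m : ℕ, (((derivedSeries H m).map H.subtype : Subgroup G) : Set G).Infinite := by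
      intro m
      induction m with
      | zero =>
        have : (derivedSeries H 0).map H.subtype = H := by
          rw [derivedSeries_zero, ← MonoidHom.range_eq_map, Subgroup.range_subtype]
        rw [this]; exact hinf'
      | succ m ih =>
        rw [derivedSeries_succ, Subgroup.map_commutator]
        exact aux_comm_infinite hna hG _ ih
    have := key n
    rw [hn] at this
    simp at this
end

section
/- Let G be an infinite non-abelian C'-cofinite group. Then G is not almost torsion-free. Moreover, if G is also Z_mon-cofinite, then there is a prime p ≥ 5 such that x^p = 1 for every x ∈ G (i.e. G has prime exponent p ≥ 5). -/
/-- Each conjugation fiber `{y | y g y⁻¹ = t}` is (empty or) a coset of the centralizer,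
hence finite when the centralizer is finite. -/
lemma fiber_finite {G : Type*} [Group G] {g : G}
    (hC : {x : G | x * g = g * x}.Finite) (t : G) :
    {y : G | y * g * y⁻¹ = t}.Finite := by
  rcases Set.eq_empty_or_nonempty {y : G | y * g * y⁻¹ = t} with h | ⟨y₀, hy₀⟩
  · simp [h]
  · apply Set.Finite.subset (hC.image (fun c => y₀ * c))
    intro y hy
    refine ⟨y₀⁻¹ * y, ?_, by group⟩
    have h1 : y * g * y⁻¹ = y₀ * g * y₀⁻¹ := hy.trans hy₀.symm
    show y₀⁻¹ * y * g = g * (y₀⁻¹ * y)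
    have h2 : y * g = y₀ * g * y₀⁻¹ * y := by
      rw [← h1]; group
    rw [mul_assoc y₀⁻¹, h2]; group

/-- If the centralizer of `g` is finite and all conjugates of `g` land in a finite set,
then `G` is finite — contradiction with `Infinite G`. -/
lemma not_infinite_aux {G : Type*} [Group G] [Infinite G] {g : G}
    (hC : {x : G | x * g = g * x}.Finite) {T : Set G} (hT : T.Finite)
    (hconj : ∀ y : G, y * g * y⁻¹ ∈ T) : False := by
  have hfin : (Set.univ : Set G).Finite := by
    apply Set.Finite.subset (hT.biUnion (fun t _ => fiber_finite hC t))
    intro y _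
    exact Set.mem_biUnion (hconj y) rfl
  exact Set.infinite_univ hfin

/-- An element with finite centralizer has finite order. -/
lemma exists_pow_eq_one_of_centralizer_finite {G : Type*} [Group G] {g : G}
    (hC : {x : G | x * g = g * x}.Finite) :
    ∃ n : ℕ, 1 ≤ n ∧ g ^ n = 1 := by
  by_contra h
  push_neg at h
  have key : ∀ i j : ℕ, i < j → g ^ i = g ^ j → False := by
    intro i j hlt heq
    have h1 : g ^ (j - i) * g ^ i = (1 : G) * g ^ i := by
      rw [← pow_add, Nat.sub_add_cancel hlt.le, ← heq, one_mul]
    have h2 : g ^ (j - i) = 1 := mul_right_cancel h1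
    exact h (j - i) (by omega) h2
  have hinj : Function.Injective (fun k : ℕ => g ^ k) := by
    intro i j hij
    rcases lt_trichotomy i j with h' | h' | h'
    · exact absurd hij (fun hh => key i j h' hh)
    · exact h'
    · exact absurd hij.symm (fun hh => key j i h' hh)
  have hinf : (Set.range fun k : ℕ => g ^ k).Infinite :=
    Set.infinite_range_of_injective hinj
  apply hinf
  apply hC.subset
  rintro _ ⟨k, rfl⟩
  exact ((Commute.refl g).pow_left k).eq

/-- In a group of exponent 3, every element commutes with its conjugates. -/
lemma exp3_conj_comm {G : Type*} [Group G] (H : ∀ z : G, z ^ 3 = 1) (x y : G) :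
    x * (y * x * y⁻¹) = (y * x * y⁻¹) * x := by
  have R : ∀ u v : G, v * u * v = u⁻¹ * v⁻¹ * u⁻¹ := by
    intro u v
    have h3 : u * (v * u * v) * (u * v) = u * (u⁻¹ * v⁻¹ * u⁻¹) * (u * v) := by
      have e1 : u * (v * u * v) * (u * v) = (u * v) ^ 3 := by
        rw [pow_succ, pow_succ, pow_one]; group
      have e2 : (1 : G) = u * (u⁻¹ * v⁻¹ * u⁻¹) * (u * v) := by group
      rw [e1, H, e2]
    exact mul_left_cancel (mul_right_cancel h3)
  have hsq : ∀ z : G, z * z = z⁻¹ := by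
    intro z
    have h1 : z * (z * z) = 1 := by
      have h0 := H z
      rw [pow_succ, pow_succ, pow_one, mul_assoc] at h0
      exact h0
    exact (inv_eq_of_mul_eq_one_right h1).symm
  have main : ∀ a b : G, a * (b⁻¹ * a * b) = (b⁻¹ * a * b) * a := by
    intro a b
    have h1 := R b⁻¹ a
    simp only [inv_inv] at h1
    have h2 := R b a
    have hab : a * (b⁻¹ * a * b) = b * a⁻¹ * b⁻¹ := by
      calc a * (b⁻¹ * a * b) = (a * b⁻¹ * a) * b := by group
        _ = (b * a⁻¹ * b) * b := by rw [h1]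
        _ = b * a⁻¹ * (b * b) := by group
        _ = b * a⁻¹ * b⁻¹ := by rw [hsq]
    have hba : (b⁻¹ * a * b) * a = b * a⁻¹ * b⁻¹ := by
      calc (b⁻¹ * a * b) * a = b⁻¹ * (a * b * a) := by group
        _ = b⁻¹ * (b⁻¹ * a⁻¹ * b⁻¹) := by rw [h2]
        _ = (b⁻¹ * b⁻¹) * a⁻¹ * b⁻¹ := by group
        _ = b * a⁻¹ * b⁻¹ := by rw [hsq b⁻¹, inv_inv]
    rw [hab, hba]
  have := main x y⁻¹
  simpa [inv_inv] using this

/-- An infinite non-abelian `C'`-cofinite group is not almost torsion-free; moreover, if it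
is also `Z_mon`-cofinite, then it has prime exponent `p ≥ 5`. -/
theorem stmt_13 {G : Type*} [Group G] [Infinite G]
    (hna : ¬ ∀ a b : G, a * b = b * a) (hG : CprimeCofinite G) :
    ¬ AlmostTorsionFree G ∧
    (ZmonCofinite G → ∃ p : ℕ, p.Prime ∧ 5 ≤ p ∧ ∀ x : G, x ^ p = 1) := by
  classical
  push_neg at hna
  obtain ⟨a, b, hab⟩ := hna
  have hCa : {x : G | x * a = a * x}.Finite := by
    rcases hG a with h | h
    · exact h
    · exfalso
      apply hab
      have hb : b ∈ {x : G | x * a = a * x} := h ▸ Set.mem_univ b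
      exact hb.symm
  obtain ⟨n, hn1, hgn⟩ := exists_pow_eq_one_of_centralizer_finite hCa
  have hconjn : ∀ y : G, y * a * y⁻¹ ∈ {x : G | x ^ n = 1} := by
    intro y
    show (y * a * y⁻¹) ^ n = 1
    rw [conj_pow, hgn]; group
  constructor
  · intro hATF
    exact not_infinite_aux hCa (hATF n hn1) hconjn
  · intro hZ
    have hPex : ∃ N : ℕ, 1 ≤ N ∧ ∀ x : G, x ^ N = 1 := by
      rcases hZ n hn1 1 with h | h
      · exact absurd h (fun hfin => not_infinite_aux hCa hfin hconjn)
      · exact ⟨n, hn1, fun x => Set.eq_univ_iff_forall.mp h x⟩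
    set N := Nat.find hPex with hNdef
    have hNspec : 1 ≤ N ∧ ∀ x : G, x ^ N = 1 := Nat.find_spec hPex
    have hN2 : 2 ≤ N := by
      by_contra hlt
      have hN1 : N = 1 := by omega
      apply hab
      have ha1 : a = 1 := by have := hNspec.2 a; rwa [hN1, pow_one] at this
      have hb1 : b = 1 := by have := hNspec.2 b; rwa [hN1, pow_one] at this
      rw [ha1, hb1]
    have hprime : N.Prime := by
      by_contra hnp
      obtain ⟨m, hmdvd, hm2, hmlt⟩ := Nat.exists_dvd_of_not_prime2 hN2 hnp
      obtain ⟨k, hk⟩ := hmdvd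
      have hk2 : 2 ≤ k := by
        match k, hk with
        | 0, hk => omega
        | 1, hk => omega
        | (k+2), hk => omega
      have hkltN : k < N := by nlinarith
      have hSfin : {y : G | y ^ k = 1}.Finite := by
        rcases hZ k (by omega) 1 with h | h
        · exact h
        · exact absurd ⟨by omega, fun x => Set.eq_univ_iff_forall.mp h x⟩
            (Nat.find_min hPex hkltN)
      have hfib : ∀ c : G, {x : G | x ^ m = c}.Finite := by
        intro c
        rcases hZ m (by omega) c with h | h
        · exact h
        · exfalso
          have h1 : (1 : G) ^ m = c := Set.eq_univ_iff_forall.mp h 1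
          have hall : ∀ x : G, x ^ m = 1 := fun x => by
            have := Set.eq_univ_iff_forall.mp h x
            rw [this, ← h1, one_pow]
          exact Nat.find_min hPex hmlt ⟨by omega, hall⟩
      have hfin : (Set.univ : Set G).Finite := by
        apply Set.Finite.subset (hSfin.biUnion (fun c _ => hfib c))
        intro x _
        have hx : x ^ m ∈ {y : G | y ^ k = 1} := by
          show (x ^ m) ^ k = 1
          rw [← pow_mul, ← hk]
          exact hNspec.2 x
        exact Set.mem_biUnion hx rfl
      exact Set.infinite_univ hfin
    have hne2 : N ≠ 2 := by
      intro h2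
      apply hab
      have hsq : ∀ x : G, x * x = 1 := fun x => by
        have := hNspec.2 x; rwa [h2, pow_two] at this
      have hinv : ∀ x : G, x⁻¹ = x := fun x => inv_eq_of_mul_eq_one_right (hsq x)
      calc a * b = (a * b)⁻¹ := (hinv (a * b)).symm
        _ = b⁻¹ * a⁻¹ := mul_inv_rev a b
        _ = b * a := by rw [hinv, hinv]
    have hne3 : N ≠ 3 := by
      intro h3
      have H3 : ∀ z : G, z ^ 3 = 1 := fun z => by have := hNspec.2 z; rwa [h3] at this
      exact not_infinite_aux hCa hCa
        (fun y => (exp3_conj_comm H3 a y).symm)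
    have hne4 : N ≠ 4 := by
      intro h4; rw [h4] at hprime; norm_num at hprime
    refine ⟨N, hprime, ?_, hNspec.2⟩
    have h2le := hprime.two_le
    omega
end

section
/- If G is an infinite non-abelian Z-cofinite group, then there is a prime p ≥ 5 such that x^p = 1 for every x ∈ G (i.e. G has prime exponent p ≥ 5). -/
section Aux

variable {G : Type*} [Group G]

/-- The conjugation equation set is elementary algebraic. -/
lemma ZCofAux.conj_set (hG : ZCofinite G) (c d : G) :
    {x : G | x * c * x⁻¹ = d}.Finite ∨ {x : G | x * c * x⁻¹ = d} = Set.univ := by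
  have h := hG [(d⁻¹, 1), (c, -1)] (by simp)
  have hset : {x : G | (([(d⁻¹, (1:ℤ)), (c, -1)]).map (fun p => p.1 * x ^ p.2)).prod = 1}
      = {x : G | x * c * x⁻¹ = d} := by
    ext x
    simp only [List.map_cons, List.map_nil, List.prod_cons, List.prod_nil, Set.mem_setOf_eq,
      zpow_one, zpow_neg_one, mul_one]
    constructor
    · intro hx
      have : d * (d⁻¹ * x * (c * x⁻¹)) = d * 1 := by rw [hx]
      calc x * c * x⁻¹ = d * (d⁻¹ * x * (c * x⁻¹)) := by group
        _ = d := by rw [hx, mul_one]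
    · intro hx
      calc d⁻¹ * x * (c * x⁻¹) = d⁻¹ * (x * c * x⁻¹) := by group
        _ = d⁻¹ * d := by rw [hx]
        _ = 1 := inv_mul_cancel d
  rwa [hset] at h

/-- The power equation set is elementary algebraic. -/
lemma ZCofAux.pow_set (hG : ZCofinite G) (c : G) {n : ℕ} (hn : n ≠ 0) :
    {x : G | x ^ n = c}.Finite ∨ {x : G | x ^ n = c} = Set.univ := by
  have h := hG ((c⁻¹, 1) :: List.replicate (n - 1) ((1 : G), (1:ℤ))) (by
    intro p hp
    rcases List.mem_cons.mp hp with h | h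
    · left; rw [h]
    · left; rw [List.eq_of_mem_replicate h])
  have hset : {x : G | ((((c⁻¹, (1:ℤ)) :: List.replicate (n - 1) ((1 : G), (1:ℤ)))).map
      (fun p => p.1 * x ^ p.2)).prod = 1} = {x : G | x ^ n = c} := by
    ext x
    simp only [List.map_cons, List.prod_cons, List.map_replicate, List.prod_replicate,
      Set.mem_setOf_eq, zpow_one, one_mul]
    have hxn : x * x ^ (n - 1) = x ^ n := by
      rw [← pow_succ']
      congr 1
      omega
    rw [mul_assoc, hxn]
    constructor
    · intro hx
      calc x ^ n = c * (c⁻¹ * x ^ n) := by group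
        _ = c := by rw [hx, mul_one]
    · intro hx
      rw [hx, inv_mul_cancel]
  rwa [hset] at h

variable (hG : ZCofinite G) {a : G} (ha : ¬ ∀ y : G, y * a = a * y)
include hG ha

/-- Fibers of the conjugation map of a noncentral element are finite. -/
lemma ZCofAux.conj_fiber_finite (c : G) : {x : G | x * a * x⁻¹ = c}.Finite := by
  rcases ZCofAux.conj_set hG a c with h | h
  · exact h
  · exfalso
    have h1 : ∀ x : G, x * a * x⁻¹ = c := by
      intro x
      have hx : x ∈ {x : G | x * a * x⁻¹ = c} := by rw [h]; trivial
      exact hx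
    have hc : c = a := by have := h1 1; simpa using this.symm
    refine ha fun y => ?_
    have := h1 y
    rw [hc] at this
    calc y * a = y * a * y⁻¹ * y := by group
      _ = a * y := by rw [this]

/-- The centralizer of a noncentral element is finite. -/
lemma ZCofAux.centralizer_finite : {x : G | x * a = a * x}.Finite := by
  have h : {x : G | x * a = a * x} = {x : G | x * a * x⁻¹ = a} := by
    ext x
    simp only [Set.mem_setOf_eq]
    constructor
    · intro hx; rw [hx]; group
    · intro hx
      calc x * a = x * a * x⁻¹ * x := by group
        _ = a * x := by rw [hx]
  rw [h]
  exact ZCofAux.conj_fiber_finite hG ha a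

variable [Infinite G]

/-- The conjugacy class of a noncentral element is infinite. -/
lemma ZCofAux.conj_range_infinite : (Set.range fun x : G => x * a * x⁻¹).Infinite := by
  intro hfin
  have hcover : (Set.univ : Set G) ⊆
      ⋃ c ∈ Set.range fun x : G => x * a * x⁻¹, {x : G | x * a * x⁻¹ = c} := by
    intro x _
    exact Set.mem_biUnion (Set.mem_range_self x) rfl
  have : (Set.univ : Set G).Finite :=
    Set.Finite.subset (Set.Finite.biUnion hfin fun c _ => ZCofAux.conj_fiber_finite hG ha c) hcover
  exact Set.infinite_univ this

/-- A noncentral element has finite order. -/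
lemma ZCofAux.finOrder : IsOfFinOrder a := by
  by_contra h
  have hinj : Function.Injective (fun n : ℕ => a ^ n) :=
    injective_pow_iff_not_isOfFinOrder.mpr h
  have hsub : Set.range (fun n : ℕ => a ^ n) ⊆ {x : G | x * a = a * x} := by
    rintro _ ⟨n, rfl⟩
    simp only [Set.mem_setOf_eq]
    exact ((Commute.refl a).pow_left n).eq
  exact (Set.infinite_range_of_injective hinj)
    (Set.Finite.subset (ZCofAux.centralizer_finite hG ha) hsub)

/-- Everything is killed by the order of a noncentral element. -/
lemma ZCofAux.forall_pow_orderOf (x : G) : x ^ orderOf a = 1 := by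
  have hfo := ZCofAux.finOrder hG ha
  have hn : orderOf a ≠ 0 := (orderOf_pos_iff.mpr hfo).ne'
  have hsub : (Set.range fun x : G => x * a * x⁻¹) ⊆ {x : G | x ^ orderOf a = 1} := by
    rintro _ ⟨y, rfl⟩
    simp only [Set.mem_setOf_eq]
    rw [conj_pow, pow_orderOf_eq_one, mul_one, mul_inv_cancel]
  rcases ZCofAux.pow_set hG 1 hn with h | h
  · exact absurd (h.subset hsub) (ZCofAux.conj_range_infinite hG ha)
  · have hx : x ∈ {x : G | x ^ orderOf a = 1} := by rw [h]; trivial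
    exact hx

end Aux

/-- In a group of exponent 3, `x*a*x = a⁻¹*x⁻¹*a⁻¹`. -/
private lemma tri3 {G : Type*} [Group G] {x a : G} (h : (x * a) ^ 3 = 1) :
    x * a * x = a⁻¹ * x⁻¹ * a⁻¹ := by
  have h3 : (x * a) * (x * a) * (x * a) = 1 := by
    rw [← h, pow_succ, pow_two]
  have h' : (x * a * x) * (a * (x * a)) = 1 := by
    calc (x * a * x) * (a * (x * a)) = (x * a) * (x * a) * (x * a) := by group
      _ = 1 := h3
  have h2 : x * a * x = (a * (x * a))⁻¹ := mul_eq_one_iff_eq_inv.mp h'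
  rw [h2]; group

/-- In a group of exponent 3, every element commutes with all its conjugates. -/
private lemma exp3_conj_comm_s14 {G : Type*} [Group G] (h : ∀ g : G, g ^ 3 = 1) (a x : G) :
    a * (x * a * x⁻¹) = (x * a * x⁻¹) * a := by
  have hinv : x⁻¹ = x * x := by
    have h1 : x * (x * x) = 1 := by
      have := h x
      rw [pow_succ, pow_two] at this
      calc x * (x * x) = x * x * x := by group
        _ = 1 := this
    exact (eq_inv_of_mul_eq_one_right h1).symm
  have t1 : x * a * x = a⁻¹ * x⁻¹ * a⁻¹ := tri3 (h (x * a))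
  have t2 : a * x⁻¹ * a = x * a⁻¹ * x := by
    have := tri3 (x := a) (a := x⁻¹) (h (a * x⁻¹))
    simpa [inv_inv] using this
  have hL : a * (x * a * x⁻¹) = x⁻¹ * a⁻¹ * x := by
    calc a * (x * a * x⁻¹) = a * (x * a * x) * x := by rw [hinv]; group
      _ = a * (a⁻¹ * x⁻¹ * a⁻¹) * x := by rw [t1]
      _ = x⁻¹ * a⁻¹ * x := by group
  have hR : (x * a * x⁻¹) * a = x⁻¹ * a⁻¹ * x := by
    calc (x * a * x⁻¹) * a = x * (a * x⁻¹ * a) := by group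
      _ = x * (x * a⁻¹ * x) := by rw [t2]
      _ = x⁻¹ * a⁻¹ * x := by rw [hinv]; group
  rw [hL, hR]

/-- If `G` is an infinite non-abelian `Z`-cofinite group, then `G` has prime exponent
`p ≥ 5`. -/
theorem stmt_14 {G : Type*} [Group G] [Infinite G]
    (hna : ¬ ∀ a b : G, a * b = b * a) (hG : ZCofinite G) :
    ∃ p : ℕ, p.Prime ∧ 5 ≤ p ∧ ∀ x : G, x ^ p = 1 := by
  push_neg at hna
  obtain ⟨a, b, hab⟩ := hna
  have ha : ¬ ∀ y : G, y * a = a * y := fun h => hab (h b).symm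
  -- G has finite exponent
  have hordpos : orderOf a ≠ 0 :=
    (orderOf_pos_iff.mpr (ZCofAux.finOrder hG ha)).ne'
  have hexp : ∀ x : G, x ^ orderOf a = 1 := ZCofAux.forall_pow_orderOf hG ha
  set e := Monoid.exponent G with he
  have hene : e ≠ 0 :=
    Monoid.ExponentExists.exponent_ne_zero ⟨orderOf a, Nat.pos_of_ne_zero hordpos, hexp⟩
  have hepow : ∀ x : G, x ^ e = 1 := fun x => Monoid.pow_exponent_eq_one x
  -- every noncentral element has order exactly e
  have hord : ∀ x : G, (¬ ∀ y : G, y * x = x * y) → orderOf x = e := by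
    intro x hx
    have h1 : orderOf x ∣ e := orderOf_dvd_of_pow_eq_one (hepow x)
    have h2 : e ∣ orderOf x :=
      Monoid.exponent_dvd_of_forall_pow_eq_one (ZCofAux.forall_pow_orderOf hG hx)
    exact Nat.dvd_antisymm h1 h2
  -- e ≥ 2
  have he1 : e ≠ 1 := by
    intro h1
    apply hab
    have := hepow a
    have hb := hepow b
    rw [h1, pow_one] at this hb
    rw [this, hb]
  have he2 : 2 ≤ e := by omega
  -- the center is finite
  have hcen : {z : G | ∀ y : G, z * y = y * z}.Finite := by
    apply Set.Finite.subset (ZCofAux.centralizer_finite hG ha)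
    intro z hz
    exact hz a
  -- e is prime
  have hprime : e.Prime := by
    rw [Nat.prime_def]
    refine ⟨he2, fun d hd => ?_⟩
    by_contra hne
    push_neg at hne
    obtain ⟨hd1, hde⟩ := hne
    have hd0 : d ≠ 0 := by rintro rfl; exact hene (zero_dvd_iff.mp hd)
    have hdlt : d < e := lt_of_le_of_ne (Nat.le_of_dvd (Nat.pos_of_ne_zero hene) hd) hde
    -- x^d is central for every x
    have hcentral : ∀ x : G, ∀ y : G, x ^ d * y = y * x ^ d := by
      intro x
      by_cases hx : ∀ y : G, y * x = x * y
      · intro y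
        have hc : Commute x y := (hx y).symm
        exact (hc.pow_left d).eq
      · by_contra hxd
        push_neg at hxd
        have hxo : orderOf x = e := hord x hx
        have hxd' : ¬ ∀ y : G, y * (x ^ d) = (x ^ d) * y := by
          obtain ⟨y, hy⟩ := hxd
          exact fun h => hy ((h y).symm)
        have ho2 : orderOf (x ^ d) = e := hord _ hxd'
        have ho3 : orderOf (x ^ d) = e / d := by
          rw [orderOf_pow' x hd0, hxo, Nat.gcd_eq_right hd]
        have : e / d < e := Nat.div_lt_self (Nat.pos_of_ne_zero hene) (by omega)
        omega
    -- fibers of x ↦ x^d are finite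
    have hfib : ∀ c : G, {x : G | x ^ d = c}.Finite := by
      intro c
      rcases ZCofAux.pow_set hG c hd0 with h | h
      · exact h
      · exfalso
        have h1 : ∀ x : G, x ^ d = c := by
          intro x
          have hx : x ∈ {x : G | x ^ d = c} := by rw [h]; trivial
          exact hx
        have hc1 : c = 1 := by
          have := h1 1
          rw [one_pow] at this
          exact this.symm
        have : e ∣ d := Monoid.exponent_dvd_of_forall_pow_eq_one (fun g => hc1 ▸ h1 g)
        have := Nat.le_of_dvd (Nat.pos_of_ne_zero hd0) this
        omega
    -- G is covered by finitely many fibers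
    have hcover : (Set.univ : Set G) ⊆
        ⋃ c ∈ {z : G | ∀ y : G, z * y = y * z}, {x : G | x ^ d = c} := by
      intro x _
      exact Set.mem_biUnion (hcentral x) rfl
    exact Set.infinite_univ
      (Set.Finite.subset (Set.Finite.biUnion hcen fun c _ => hfib c) hcover)
  -- e ≠ 2
  have hne2 : e ≠ 2 := by
    intro h2
    apply hab
    have sq : ∀ x : G, x * x = 1 := by
      intro x
      have := hepow x
      rwa [h2, pow_two] at this
    have hinv : ∀ x : G, x⁻¹ = x := fun x => inv_eq_of_mul_eq_one_right (sq x)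
    calc a * b = (a * b)⁻¹ := (hinv (a * b)).symm
      _ = b⁻¹ * a⁻¹ := mul_inv_rev a b
      _ = b * a := by rw [hinv, hinv]
  -- e ≠ 3
  have hne3 : e ≠ 3 := by
    intro h3
    have h3' : ∀ g : G, g ^ 3 = 1 := fun g => h3 ▸ hepow g
    have hsub : (Set.range fun x : G => x * a * x⁻¹) ⊆ {x : G | x * a = a * x} := by
      rintro _ ⟨y, rfl⟩
      exact (exp3_conj_comm_s14 h3' a y).symm
    exact ZCofAux.conj_range_infinite hG ha
      (Set.Finite.subset (ZCofAux.centralizer_finite hG ha) hsub)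
  have h5 : 5 ≤ e := by
    have h2 := hprime.two_le
    have h4 : e ≠ 4 := by
      intro h
      rw [h] at hprime
      norm_num at hprime
    omega
  exact ⟨e, hprime, h5, hepow⟩
end

section
/- Let G = G₁ × G₂ be an infinite non-abelian direct product of two groups. Then G is C'-cofinite if and only if exactly one of the factors is finite abelian and the other is an infinite non-abelian C'-cofinite group; that is, G is C'-cofinite if and only if either (G₁ is infinite, non-abelian and C'-cofinite and G₂ is finite abelian) or (G₂ is infinite, non-abelian and C'-cofinite and G₁ is finite abelian). -/
lemma cent_prod {G₁ G₂ : Type*} [Group G₁] [Group G₂] (g : G₁ × G₂) :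
    {x : G₁ × G₂ | x * g = g * x} =
      {x : G₁ | x * g.1 = g.1 * x} ×ˢ {x : G₂ | x * g.2 = g.2 * x} := by
  ext ⟨a, b⟩
  simp [Prod.ext_iff, Set.mem_prod]

lemma cent_one {G : Type*} [Group G] : {x : G | x * 1 = 1 * x} = Set.univ := by
  ext x; simp

lemma cent_nonempty {G : Type*} [Group G] (g : G) : {x : G | x * g = g * x}.Nonempty :=
  ⟨1, by simp⟩

lemma aux_fwd {G₁ G₂ : Type*} [Group G₁] [Group G₂] [Infinite (G₁ × G₂)]
    (h : CprimeCofinite (G₁ × G₂)) (hn1 : ¬ ∀ a b : G₁, a * b = b * a) :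
    Infinite G₁ ∧ (¬ ∀ a b : G₁, a * b = b * a) ∧ CprimeCofinite G₁ ∧
      Finite G₂ ∧ (∀ a b : G₂, a * b = b * a) := by
  push_neg at hn1
  obtain ⟨a, b, hab⟩ := hn1
  have hCa : {x : G₁ | x * a = a * x} ≠ Set.univ := by
    intro hu
    have hb : b ∈ {x : G₁ | x * a = a * x} := hu ▸ Set.mem_univ b
    exact hab hb.symm
  -- centralizer of (a,1)
  have hfin : ({x : G₁ | x * a = a * x}).Finite ∧ Finite G₂ := by
    rcases h (a, 1) with hf | hu
    · rw [cent_prod] at hf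
      simp only [cent_one] at hf
      refine ⟨Set.Finite.of_prod_left hf Set.univ_nonempty, ?_⟩
      exact Set.finite_univ_iff.mp (Set.Finite.of_prod_right hf (cent_nonempty a))
    · rw [cent_prod] at hu
      simp only [cent_one] at hu
      rw [Set.prod_eq_univ] at hu
      exact absurd hu.1 hCa
  obtain ⟨hCafin, hG2fin⟩ := hfin
  have hG1inf : Infinite G₁ := by
    by_contra hinf
    rw [not_infinite_iff_finite] at hinf
    exact not_finite (G₁ × G₂)
  have hG2ab : ∀ c d : G₂, c * d = d * c := by
    by_contra hc
    push_neg at hc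
    obtain ⟨c, d, hcd⟩ := hc
    have hCc : {x : G₂ | x * c = c * x} ≠ Set.univ := by
      intro hu
      have hd : d ∈ _ := hu ▸ Set.mem_univ d
      exact hcd hd.symm
    rcases h (1, c) with hf | hu
    · rw [cent_prod] at hf
      simp only [cent_one] at hf
      have : Finite G₁ := Set.finite_univ_iff.mp
        (Set.Finite.of_prod_left hf (cent_nonempty c))
      have := not_finite G₁; exact this
    · rw [cent_prod] at hu
      simp only [cent_one] at hu
      rw [Set.prod_eq_univ] at hu
      exact hCc hu.2
  refine ⟨hG1inf, by push_neg; exact ⟨a, b, hab⟩, ?_, hG2fin, hG2ab⟩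
  intro g
  rcases h (g, 1) with hf | hu
  · rw [cent_prod] at hf
    simp only [cent_one] at hf
    exact Or.inl (Set.Finite.of_prod_left hf Set.univ_nonempty)
  · rw [cent_prod] at hu
    simp only [cent_one] at hu
    rw [Set.prod_eq_univ] at hu
    exact Or.inr hu.1

lemma aux_fwd' {G₁ G₂ : Type*} [Group G₁] [Group G₂] [Infinite (G₁ × G₂)]
    (h : CprimeCofinite (G₁ × G₂)) (hn2 : ¬ ∀ a b : G₂, a * b = b * a) :
    Infinite G₂ ∧ (¬ ∀ a b : G₂, a * b = b * a) ∧ CprimeCofinite G₂ ∧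
      Finite G₁ ∧ (∀ a b : G₁, a * b = b * a) := by
  push_neg at hn2
  obtain ⟨a, b, hab⟩ := hn2
  have hCa : {x : G₂ | x * a = a * x} ≠ Set.univ := by
    intro hu
    have hb : b ∈ _ := hu ▸ Set.mem_univ b
    exact hab hb.symm
  have hfin : ({x : G₂ | x * a = a * x}).Finite ∧ Finite G₁ := by
    rcases h (1, a) with hf | hu
    · rw [cent_prod] at hf
      simp only [cent_one] at hf
      refine ⟨Set.Finite.of_prod_right hf Set.univ_nonempty, ?_⟩
      exact Set.finite_univ_iff.mp (Set.Finite.of_prod_left hf (cent_nonempty a))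
    · rw [cent_prod] at hu
      simp only [cent_one] at hu
      rw [Set.prod_eq_univ] at hu
      exact absurd hu.2 hCa
  obtain ⟨hCafin, hG1fin⟩ := hfin
  have hG2inf : Infinite G₂ := by
    by_contra hinf
    rw [not_infinite_iff_finite] at hinf
    exact not_finite (G₁ × G₂)
  have hG1ab : ∀ c d : G₁, c * d = d * c := by
    by_contra hc
    push_neg at hc
    obtain ⟨c, d, hcd⟩ := hc
    have hCc : {x : G₁ | x * c = c * x} ≠ Set.univ := by
      intro hu
      have hd : d ∈ _ := hu ▸ Set.mem_univ d
      exact hcd hd.symm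
    rcases h (c, 1) with hf | hu
    · rw [cent_prod] at hf
      simp only [cent_one] at hf
      have : Finite G₂ := Set.finite_univ_iff.mp
        (Set.Finite.of_prod_right hf (cent_nonempty c))
      have := not_finite G₂; exact this
    · rw [cent_prod] at hu
      simp only [cent_one] at hu
      rw [Set.prod_eq_univ] at hu
      exact hCc hu.1
  refine ⟨hG2inf, by push_neg; exact ⟨a, b, hab⟩, ?_, hG1fin, hG1ab⟩
  intro g
  rcases h (1, g) with hf | hu
  · rw [cent_prod] at hf
    simp only [cent_one] at hf
    exact Or.inl (Set.Finite.of_prod_right hf Set.univ_nonempty)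
  · rw [cent_prod] at hu
    simp only [cent_one] at hu
    rw [Set.prod_eq_univ] at hu
    exact Or.inr hu.2

/-- An infinite non-abelian direct product `G₁ × G₂` is `C'`-cofinite if and only if
exactly one of the factors is finite abelian while the other is an infinite non-abelian
`C'`-cofinite group. -/
theorem stmt_15 {G₁ G₂ : Type*} [Group G₁] [Group G₂] [Infinite (G₁ × G₂)]
    (hna : ¬ ∀ a b : G₁ × G₂, a * b = b * a) :
    CprimeCofinite (G₁ × G₂) ↔
      (Infinite G₁ ∧ (¬ ∀ a b : G₁, a * b = b * a) ∧ CprimeCofinite G₁ ∧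
        Finite G₂ ∧ (∀ a b : G₂, a * b = b * a)) ∨
      (Infinite G₂ ∧ (¬ ∀ a b : G₂, a * b = b * a) ∧ CprimeCofinite G₂ ∧
        Finite G₁ ∧ (∀ a b : G₁, a * b = b * a)) := by
  constructor
  · intro h
    have hor : (¬ ∀ a b : G₁, a * b = b * a) ∨ (¬ ∀ a b : G₂, a * b = b * a) := by
      by_contra hc
      push_neg at hc
      obtain ⟨h1, h2⟩ := hc
      exact hna fun p q => Prod.ext (h1 _ _) (h2 _ _)
    rcases hor with hn1 | hn2
    · exact Or.inl (aux_fwd h hn1)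
    · exact Or.inr (aux_fwd' h hn2)
  · rintro (⟨hinf, hn1, hcp, hfin, hab⟩ | ⟨hinf, hn2, hcp, hfin, hab⟩)
    · intro g
      rw [cent_prod]
      have h2 : {x : G₂ | x * g.2 = g.2 * x} = Set.univ := by
        ext x; simp [hab x g.2]
      rcases hcp g.1 with hf | hu
      · exact Or.inl (hf.prod (Set.toFinite _))
      · rw [hu, h2, Set.univ_prod_univ]
        exact Or.inr rfl
    · intro g
      rw [cent_prod]
      have h1 : {x : G₁ | x * g.1 = g.1 * x} = Set.univ := by
        ext x; simp [hab x g.1]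
      rcases hcp g.2 with hf | hu
      · exact Or.inl ((Set.toFinite _).prod hf)
      · rw [hu, h1, Set.univ_prod_univ]
        exact Or.inr rfl
end

section
/- Let G be a C'-cofinite group and let H be a subgroup of G contained in the center Z(G). Then the quotient group G/H is C'-cofinite. -/
/-- If `G` is `C'`-cofinite and `H` is a subgroup of the center `Z(G)` (hence normal),
then the quotient `G/H` is `C'`-cofinite. -/
theorem stmt_16 {G : Type*} [Group G] (hG : CprimeCofinite G)
    (H : Subgroup G) (hH : H ≤ Subgroup.center G) :
    letI : H.Normal :=
      ⟨fun n hn g => by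
        have hc := (Subgroup.mem_center_iff.mp (hH hn)) g
        rw [hc, mul_assoc, mul_inv_cancel, mul_one]; exact hn⟩
    CprimeCofinite (G ⧸ H) := by
  intro q
  obtain ⟨g, rfl⟩ := QuotientGroup.mk_surjective q
  rcases hG g with hfin | huniv
  · left
    have hHfin : (H : Set G).Finite :=
      hfin.subset (fun h hh => ((Subgroup.mem_center_iff.mp (hH hh)) g).symm)
    set K : Set G := {x : G | x⁻¹ * g⁻¹ * x * g ∈ H} with hKdef
    have hKfin : K.Finite := by
      have hsub : K ⊆ ⋃ h ∈ (H : Set G), {x : G | x⁻¹ * g⁻¹ * x * g = h} := by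
        intro x hx; exact Set.mem_biUnion hx rfl
      refine Set.Finite.subset (Set.Finite.biUnion hHfin ?_) hsub
      intro h _
      by_cases hne : ({x : G | x⁻¹ * g⁻¹ * x * g = h}).Nonempty
      · obtain ⟨x₀, hx₀⟩ := hne
        refine (hfin.image (· * x₀)).subset ?_
        intro x hx
        have e : x⁻¹ * g⁻¹ * x * g = x₀⁻¹ * g⁻¹ * x₀ * g := hx.trans hx₀.symm
        have hc : g⁻¹ * (x * x₀⁻¹) * g = x * x₀⁻¹ := by
          have h1 : g⁻¹ * (x * x₀⁻¹) * g
              = (x * (x⁻¹ * g⁻¹ * x * g)) * (x₀ * (x₀⁻¹ * g⁻¹ * x₀ * g))⁻¹ := by group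
          rw [h1, e]; group
        refine ⟨x * x₀⁻¹, ?_, by group⟩
        show (x * x₀⁻¹) * g = g * (x * x₀⁻¹)
        conv_rhs => rw [← hc]
        group
      · rw [Set.not_nonempty_iff_eq_empty] at hne
        rw [hne]; exact Set.finite_empty
    refine (hKfin.image (QuotientGroup.mk)).subset ?_
    intro q hq
    obtain ⟨y, rfl⟩ := QuotientGroup.mk_surjective q
    have hq' : (QuotientGroup.mk (y * g) : G ⧸ H) = QuotientGroup.mk (g * y) := hq
    have hmem : (y * g)⁻¹ * (g * y) ∈ H := QuotientGroup.eq.mp hq'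
    have hy : y⁻¹ * g⁻¹ * y * g ∈ H := by
      have h2 := H.inv_mem hmem
      have h3 : ((y * g)⁻¹ * (g * y))⁻¹ = y⁻¹ * g⁻¹ * y * g := by group
      rwa [h3] at h2
    exact ⟨y, hy, rfl⟩
  · right
    ext q
    simp only [Set.mem_univ, iff_true, Set.mem_setOf_eq]
    obtain ⟨y, rfl⟩ := QuotientGroup.mk_surjective q
    have hy : y * g = g * y := by
      have : y ∈ {x : G | x * g = g * x} := huniv ▸ Set.mem_univ y
      exact this
    show (QuotientGroup.mk (y * g) : G ⧸ H) = QuotientGroup.mk (g * y)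
    rw [hy]
end

section
/- Let G be an infinite non-abelian C'-cofinite group and let H₁, H₂ be infinite normal subgroups of G. Then the intersection H₁ ∩ H₂ is infinite. -/
/-- In an infinite non-abelian `C'`-cofinite group, the intersection of two infinite
normal subgroups is infinite. -/
theorem stmt_17 {G : Type*} [Group G] [Infinite G]
    (hna : ¬ ∀ a b : G, a * b = b * a) (hG : CprimeCofinite G)
    (H₁ H₂ : Subgroup G) [H₁.Normal] [H₂.Normal]
    (h₁ : (H₁ : Set G).Infinite) (h₂ : (H₂ : Set G).Infinite) :
    ((H₁ ⊓ H₂ : Subgroup G) : Set G).Infinite := by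
  by_contra hfin
  rw [Set.not_infinite] at hfin
  push_neg at hna
  obtain ⟨a, b, hab⟩ := hna
  -- the centralizer of `a` is finite
  have hSa : {x : G | x * a = a * x}.Finite := by
    rcases hG a with h | h
    · exact h
    · exfalso
      have : b ∈ {x : G | x * a = a * x} := h ▸ Set.mem_univ b
      exact hab this.symm
  -- every element of H₂ is central
  have hcent : ∀ h ∈ H₂, ∀ x : G, x * h = h * x := by
    intro h hh
    haveI : Infinite ↥H₁ := Set.infinite_coe_iff.mpr h₁
    haveI : Finite ↥(H₁ ⊓ H₂ : Subgroup G) := Set.finite_coe_iff.mpr hfin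
    -- commutator map from H₁ into H₁ ⊓ H₂
    have hmem : ∀ x : ↥H₁, (x : G) * h * (x : G)⁻¹ * h⁻¹ ∈ (H₁ ⊓ H₂ : Subgroup G) := by
      intro x
      constructor
      · have : (h : G) * (x : G)⁻¹ * h⁻¹ ∈ H₁ :=
          Subgroup.Normal.conj_mem ‹H₁.Normal› _ (H₁.inv_mem x.2) h
        have := H₁.mul_mem x.2 this
        simpa [mul_assoc] using this
      · have : (x : G) * h * (x : G)⁻¹ ∈ H₂ :=
          Subgroup.Normal.conj_mem ‹H₂.Normal› _ hh (x : G)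
        exact H₂.mul_mem this (H₂.inv_mem hh)
    set f : ↥H₁ → ↥(H₁ ⊓ H₂ : Subgroup G) := fun x => ⟨_, hmem x⟩ with hf
    obtain ⟨y, hy⟩ := Finite.exists_infinite_fiber f
    haveI := hy
    obtain ⟨x₀, hx₀⟩ := (Set.infinite_coe_iff.mp hy).nonempty
    -- centralizer of h is infinite
    have hCinf : {z : G | z * h = h * z}.Infinite := by
      apply Set.infinite_of_injective_forall_mem
        (f := fun z : ↥(f ⁻¹' {y}) => ((x₀ : G))⁻¹ * ((z : ↥H₁) : G))
      · intro u v huv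
        have : ((u : ↥H₁) : G) = ((v : ↥H₁) : G) := mul_left_cancel huv
        exact Subtype.ext (Subtype.ext this)
      · rintro ⟨x, hx⟩
        have e1 : f x = y := hx
        have e2 : f x₀ = y := hx₀
        have e3 : (x : G) * h * (x : G)⁻¹ * h⁻¹ = (x₀ : G) * h * (x₀ : G)⁻¹ * h⁻¹ := by
          have := e1.trans e2.symm
          exact congrArg Subtype.val this
        have e4 : (x : G) * h * (x : G)⁻¹ = (x₀ : G) * h * (x₀ : G)⁻¹ :=
          mul_right_cancel e3
        show ((x₀ : G))⁻¹ * (x : G) * h = h * (((x₀ : G))⁻¹ * (x : G))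
        have : ((x₀ : G))⁻¹ * ((x : G) * h * (x : G)⁻¹) * (x₀ : G) = h := by
          rw [e4]; group
        calc ((x₀ : G))⁻¹ * (x : G) * h
            = ((x₀ : G))⁻¹ * ((x : G) * h * (x : G)⁻¹) * (x₀ : G) * (((x₀ : G))⁻¹ * (x : G)) := by
              group
          _ = h * (((x₀ : G))⁻¹ * (x : G)) := by rw [this]
    rcases hG h with hfin' | huniv
    · exact absurd hfin' (fun hf' => hCinf hf')
    · intro x
      have : x ∈ {z : G | z * h = h * z} := huniv ▸ Set.mem_univ x
      exact this
  -- H₂ ⊆ centralizer of a, contradiction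
  have : (H₂ : Set G) ⊆ {x : G | x * a = a * x} := fun x hx => (hcent x hx a).symm
  exact (h₂.mono this) hSa
end
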